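/- Let d ≥ 1 and let H : ℝ^d × ℝ^d → ℝ be continuous and such that p ↦ H(p, y) is convex for every y ∈ ℝ^d. Let p₁, p₂ ∈ ℝ^d and set p = (p₁ + p₂)/2. Suppose v₁, v₂, v : ℝ^d → ℝ are C² and ℤ^d-periodic and λ₁, λ₂, λ ∈ ℝ satisfy −Δv_i(y) + H(p_i + Dv_i(y), y) = λ_i for all y (i = 1, 2) and −Δv(y) + H(p + Dv(y), y) = λ for all y. Then λ ≤ (λ₁ + λ₂)/2. -/

import Mathlib

/-
At a minimum point `y₀` of the `ℤ^d`-periodic function `w = v - (v₁ + v₂)/2` (which exists by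
compactness of the unit cube), `Dv = (Dv₁ + Dv₂)/2` and `Δw ≥ 0`. Convexity of `H(·, y₀)` then
turns the three cell equations at `y₀` into `λ ≤ (λ₁ + λ₂)/2`.
-/

open MeasureTheory

/-- The Laplacian of a function on `ℝ^d`, written in coordinates. -/
noncomputable def lap {d : ℕ} (f : EuclideanSpace ℝ (Fin d) → ℝ)
    (x : EuclideanSpace ℝ (Fin d)) : ℝ :=
  ∑ i : Fin d, fderiv ℝ (fun y => fderiv ℝ f y (EuclideanSpace.single i 1)) x
    (EuclideanSpace.single i 1)

open Filter Topology

theorem IsLocalMin.deriv_deriv_nonneg {f : ℝ → ℝ} {a : ℝ} (h : IsLocalMin f a)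
    (hc : ContinuousAt f a) : 0 ≤ deriv (deriv f) a := by
  by_contra! hneg
  -- otherwise the second derivative test makes `a` a local maximum too, so `f` is locally constant
  have hmax : IsLocalMax f a := isLocalMax_of_deriv_deriv_neg hneg h.deriv_eq_zero hc
  have hconst : f =ᶠ[𝓝 a] fun _ => f a := (h.and hmax).mono fun x hx => le_antisymm hx.2 hx.1
  have h2 : deriv (deriv f) a = 0 := by simpa using hconst.deriv.deriv_eq
  exact hneg.ne h2

section Directional

variable {E F : Type*} [NormedAddCommGroup E] [NormedSpace ℝ E]
  [NormedAddCommGroup F] [NormedSpace ℝ F]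

theorem DifferentiableAt.hasDerivAt_comp_add_smul {g : E → F} {x u : E} {t : ℝ}
    (hg : DifferentiableAt ℝ g (x + t • u)) :
    HasDerivAt (fun s : ℝ => g (x + s • u)) (fderiv ℝ g (x + t • u) u) t :=
  hg.hasFDerivAt.comp_hasDerivAt t (by simpa using ((hasDerivAt_id t).smul_const u).const_add x)

theorem ContDiff.differentiable_fderiv_apply {f : E → F} (hf : ContDiff ℝ 2 f) (u : E) :
    Differentiable ℝ fun y => fderiv ℝ f y u :=
  ((hf.fderiv_right (m := 1) (by norm_num)).clm_apply contDiff_const).differentiable one_ne_zero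

theorem IsLocalMin.fderiv_fderiv_apply_nonneg {f : E → ℝ} {x : E} (h : IsLocalMin f x)
    (hf : ContDiff ℝ 2 f) (u : E) : 0 ≤ fderiv ℝ (fun y => fderiv ℝ f y u) x u := by
  set g : ℝ → ℝ := fun t => f (x + t • u)
  have hline : Continuous fun t : ℝ => x + t • u := by fun_prop
  have hmin : IsLocalMin g 0 :=
    IsLocalMin.comp_continuous (g := fun t : ℝ => x + t • u) (by simpa using h)
      hline.continuousAt
  have hderiv : deriv g = fun t => fderiv ℝ f (x + t • u) u :=
    funext fun t => (hf.differentiable two_ne_zero _).hasDerivAt_comp_add_smul.deriv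
  have hderiv2 : deriv (deriv g) 0 = fderiv ℝ (fun y => fderiv ℝ f y u) x u := by
    simpa [hderiv] using
      ((hf.differentiable_fderiv_apply u) (x + (0 : ℝ) • u)).hasDerivAt_comp_add_smul.deriv
  exact hderiv2 ▸ hmin.deriv_deriv_nonneg (hf.continuous.comp hline).continuousAt

end Directional

theorem gradient_sub {𝕜 F : Type*} [RCLike 𝕜] [NormedAddCommGroup F] [InnerProductSpace 𝕜 F]
    [CompleteSpace F] {f g : F → 𝕜} {x : F} (hf : DifferentiableAt 𝕜 f x)
    (hg : DifferentiableAt 𝕜 g x) : gradient (f - g) x = gradient f x - gradient g x := by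
  simp only [gradient, fderiv_sub hf hg, map_sub]

theorem gradient_const_smul {F : Type*} [NormedAddCommGroup F] [InnerProductSpace ℝ F]
    [CompleteSpace F] (c : ℝ) (f : F → ℝ) (x : F) :
    gradient (c • f) x = c • gradient f x := by
  simp only [gradient, fderiv_const_smul_field, Pi.smul_apply, map_smul]

section Laplacian

variable {d : ℕ}

theorem lap_sub {f g : EuclideanSpace ℝ (Fin d) → ℝ} (hf : ContDiff ℝ 2 f)
    (hg : ContDiff ℝ 2 g) (x : EuclideanSpace ℝ (Fin d)) :
    lap (f - g) x = lap f x - lap g x := by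
  simp only [lap, ← Finset.sum_sub_distrib]
  refine Finset.sum_congr rfl fun i _ => ?_
  have hfg : (fun y => fderiv ℝ (f - g) y (EuclideanSpace.single i 1)) =
      (fun y => fderiv ℝ f y (EuclideanSpace.single i 1)) -
        fun y => fderiv ℝ g y (EuclideanSpace.single i 1) := by
    ext y
    simp [fderiv_sub ((hf.differentiable two_ne_zero) y) ((hg.differentiable two_ne_zero) y)]
  rw [hfg, fderiv_sub (hf.differentiable_fderiv_apply _ x) (hg.differentiable_fderiv_apply _ x)]
  rfl

theorem lap_const_smul (c : ℝ) (f : EuclideanSpace ℝ (Fin d) → ℝ)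
    (x : EuclideanSpace ℝ (Fin d)) : lap (c • f) x = c * lap f x := by
  simp only [lap, Finset.mul_sum]
  refine Finset.sum_congr rfl fun i _ => ?_
  have hcf : (fun y => fderiv ℝ (c • f) y (EuclideanSpace.single i 1)) =
      c • fun y => fderiv ℝ f y (EuclideanSpace.single i 1) := by
    ext y
    simp [fderiv_const_smul_field]
  rw [hcf, fderiv_const_smul_field]
  rfl

theorem IsLocalMin.lap_nonneg {f : EuclideanSpace ℝ (Fin d) → ℝ} {x : EuclideanSpace ℝ (Fin d)}
    (h : IsLocalMin f x) (hf : ContDiff ℝ 2 f) : 0 ≤ lap f x :=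
  Finset.sum_nonneg fun _ _ => h.fderiv_fderiv_apply_nonneg hf _

end Laplacian

section Periodic

variable {d : ℕ}

def IsIntPeriodic {α : Type*} (f : EuclideanSpace ℝ (Fin d) → α) : Prop :=
  ∀ (y : EuclideanSpace ℝ (Fin d)) (k : Fin d → ℤ),
    f (y + (WithLp.equiv 2 (Fin d → ℝ)).symm (fun i => (k i : ℝ))) = f y

theorem exists_intTranslate_mem_unitCube (y : EuclideanSpace ℝ (Fin d)) :
    ∃ k : Fin d → ℤ, y + (WithLp.equiv 2 (Fin d → ℝ)).symm (fun i => (k i : ℝ)) ∈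
      (EuclideanSpace.equiv (Fin d) ℝ).symm '' Set.Icc 0 1 :=
  ⟨fun i => -⌊y i⌋, fun i => Int.fract (y i),
    ⟨fun i => Int.fract_nonneg _, fun i => (Int.fract_lt_one _).le⟩,
    by ext i; simp [Int.fract, sub_eq_add_neg, EuclideanSpace.equiv]⟩

theorem IsIntPeriodic.exists_forall_le {α : Type*} [LinearOrder α] [TopologicalSpace α]
    [ClosedIicTopology α] {f : EuclideanSpace ℝ (Fin d) → α} (hper : IsIntPeriodic f)
    (hf : Continuous f) : ∃ x, ∀ y, f x ≤ f y := by
  have hcube : IsCompact ((EuclideanSpace.equiv (Fin d) ℝ).symm '' Set.Icc 0 1) :=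
    isCompact_Icc.image (EuclideanSpace.equiv (Fin d) ℝ).symm.continuous
  obtain ⟨x, -, hx⟩ :=
    hcube.exists_isMinOn ((Set.nonempty_Icc.2 zero_le_one).image _) hf.continuousOn
  refine ⟨x, fun y => ?_⟩
  obtain ⟨k, hk⟩ := exists_intTranslate_mem_unitCube y
  exact hper y k ▸ hx hk

end Periodic

theorem IsLocalMin.gradient_eq_and_lap_ge {d : ℕ} {v v₁ v₂ : EuclideanSpace ℝ (Fin d) → ℝ}
    {a b : ℝ} {y₀ : EuclideanSpace ℝ (Fin d)} (h : IsLocalMin (v - a • v₁ - b • v₂) y₀)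
    (hv : ContDiff ℝ 2 v) (hv₁ : ContDiff ℝ 2 v₁) (hv₂ : ContDiff ℝ 2 v₂) :
    gradient v y₀ = a • gradient v₁ y₀ + b • gradient v₂ y₀ ∧
      a * lap v₁ y₀ + b * lap v₂ y₀ ≤ lap v y₀ := by
  have hav₁ : ContDiff ℝ 2 (a • v₁) := contDiff_const.smul hv₁
  have hbv₂ : ContDiff ℝ 2 (b • v₂) := contDiff_const.smul hv₂
  have hvv₁ : ContDiff ℝ 2 (v - a • v₁) := hv.sub hav₁
  constructor
  · have h0 : gradient (v - a • v₁ - b • v₂) y₀ = 0 := by simp [gradient, h.fderiv_eq_zero]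
    rw [gradient_sub (hvv₁.differentiable two_ne_zero y₀) (hbv₂.differentiable two_ne_zero y₀),
      gradient_sub (hv.differentiable two_ne_zero y₀) (hav₁.differentiable two_ne_zero y₀),
      gradient_const_smul, gradient_const_smul] at h0
    rw [← sub_eq_zero, ← h0]
    abel
  · have h0 := h.lap_nonneg (hvv₁.sub hbv₂)
    rw [lap_sub hvv₁ hbv₂, lap_sub hv hav₁, lap_const_smul, lap_const_smul] at h0
    linarith

theorem stmt14_general (d : ℕ)
    (H : EuclideanSpace ℝ (Fin d) → EuclideanSpace ℝ (Fin d) → ℝ)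
    (hH_conv : ∀ y : EuclideanSpace ℝ (Fin d), ConvexOn ℝ Set.univ fun p => H p y)
    (p₁ p₂ : EuclideanSpace ℝ (Fin d))
    (v₁ v₂ v : EuclideanSpace ℝ (Fin d) → ℝ) (lam₁ lam₂ lam : ℝ)
    (hv₁ : ContDiff ℝ 2 v₁) (hv₂ : ContDiff ℝ 2 v₂) (hv : ContDiff ℝ 2 v)
    (hv₁_per : ∀ (y : EuclideanSpace ℝ (Fin d)) (k : Fin d → ℤ),
      v₁ (y + (WithLp.equiv 2 (Fin d → ℝ)).symm (fun i => (k i : ℝ))) = v₁ y)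
    (hv₂_per : ∀ (y : EuclideanSpace ℝ (Fin d)) (k : Fin d → ℤ),
      v₂ (y + (WithLp.equiv 2 (Fin d → ℝ)).symm (fun i => (k i : ℝ))) = v₂ y)
    (hv_per : ∀ (y : EuclideanSpace ℝ (Fin d)) (k : Fin d → ℤ),
      v (y + (WithLp.equiv 2 (Fin d → ℝ)).symm (fun i => (k i : ℝ))) = v y)
    (heq₁ : ∀ y, -lap v₁ y + H (p₁ + gradient v₁ y) y = lam₁)
    (heq₂ : ∀ y, -lap v₂ y + H (p₂ + gradient v₂ y) y = lam₂)
    (heq : ∀ y, -lap v y + H ((2 : ℝ)⁻¹ • (p₁ + p₂) + gradient v y) y = lam) :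
    lam ≤ (lam₁ + lam₂) / 2 := by
  set w := v - (2 : ℝ)⁻¹ • v₁ - (2 : ℝ)⁻¹ • v₂
  have hw_per : IsIntPeriodic w := fun y k => by
    simp only [w, Pi.sub_apply, Pi.smul_apply, hv_per y k, hv₁_per y k, hv₂_per y k]
  have hw_cont : Continuous w := (hv.continuous.sub (hv₁.continuous.const_smul _)).sub
    (hv₂.continuous.const_smul _)
  obtain ⟨y₀, hy₀⟩ := hw_per.exists_forall_le hw_cont
  have hmin : IsLocalMin w y₀ := Eventually.of_forall hy₀
  obtain ⟨hgrad, hlap⟩ := hmin.gradient_eq_and_lap_ge hv hv₁ hv₂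
  have harg : (2 : ℝ)⁻¹ • (p₁ + p₂) + gradient v y₀ =
      (2 : ℝ)⁻¹ • (p₁ + gradient v₁ y₀) + (2 : ℝ)⁻¹ • (p₂ + gradient v₂ y₀) := by
    rw [hgrad]
    module
  have hH := (hH_conv y₀).2 (Set.mem_univ (p₁ + gradient v₁ y₀))
    (Set.mem_univ (p₂ + gradient v₂ y₀)) (by norm_num : (0 : ℝ) ≤ 2⁻¹)
    (by norm_num : (0 : ℝ) ≤ 2⁻¹) (by norm_num)
  simp only [← harg, smul_eq_mul] at hH
  linarith [heq y₀, heq₁ y₀, heq₂ y₀]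

/-- midpoint convexity of the effective Hamiltonian defined through the
cell problem `−Δv + H(p + Dv, y) = H̄(p)` on the torus. -/
theorem stmt14 (d : ℕ) (hd : 1 ≤ d)
    (H : EuclideanSpace ℝ (Fin d) → EuclideanSpace ℝ (Fin d) → ℝ)
    (hH_cont : Continuous fun p : EuclideanSpace ℝ (Fin d) × EuclideanSpace ℝ (Fin d) =>
      H p.1 p.2)
    (hH_conv : ∀ y : EuclideanSpace ℝ (Fin d), ConvexOn ℝ Set.univ fun p => H p y)
    (p₁ p₂ : EuclideanSpace ℝ (Fin d))
    (v₁ v₂ v : EuclideanSpace ℝ (Fin d) → ℝ) (lam₁ lam₂ lam : ℝ)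
    (hv₁ : ContDiff ℝ 2 v₁) (hv₂ : ContDiff ℝ 2 v₂) (hv : ContDiff ℝ 2 v)
    (hv₁_per : ∀ (y : EuclideanSpace ℝ (Fin d)) (k : Fin d → ℤ),
      v₁ (y + (WithLp.equiv 2 (Fin d → ℝ)).symm (fun i => (k i : ℝ))) = v₁ y)
    (hv₂_per : ∀ (y : EuclideanSpace ℝ (Fin d)) (k : Fin d → ℤ),
      v₂ (y + (WithLp.equiv 2 (Fin d → ℝ)).symm (fun i => (k i : ℝ))) = v₂ y)
    (hv_per : ∀ (y : EuclideanSpace ℝ (Fin d)) (k : Fin d → ℤ),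
      v (y + (WithLp.equiv 2 (Fin d → ℝ)).symm (fun i => (k i : ℝ))) = v y)
    (heq₁ : ∀ y, -lap v₁ y + H (p₁ + gradient v₁ y) y = lam₁)
    (heq₂ : ∀ y, -lap v₂ y + H (p₂ + gradient v₂ y) y = lam₂)
    (heq : ∀ y, -lap v y + H ((2 : ℝ)⁻¹ • (p₁ + p₂) + gradient v y) y = lam) :
    lam ≤ (lam₁ + lam₂) / 2 :=
  stmt14_general d H hH_conv p₁ p₂ v₁ v₂ v lam₁ lam₂ lam hv₁ hv₂ hv hv₁_per hv₂_per hv_per heq₁ heq₂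
    heq
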